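/- arXiv:2004.13367 — 2 statements merged into one kernel-verified Lean document; each statement's English description precedes it below -/
import Mathlib

section
/- For all integers n > 0 and m ≥ 0, the sum over j from 0 to m of binom(m, j) · j! · (n + m - j - 1)! equals (n + m)!/n. -/
/-!
Write `n = k + 1`. Since `C(m, j) j! = m! / (m - j)!` and `(m - j + k)! / ((m - j)! k!) = C(m - j + k, k)`,
the `j`-th term is `m! k! C(m - j + k, k)`, and the hockey-stick identity sums these binomials to
`C(m + k + 1, k + 1)`. Multiplying by `n = k + 1` turns `m! k! C(m + k + 1, k + 1)` into `(m + n)!`.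
-/

open Finset Nat

lemma choose_mul_factorial_mul_factorial_sub_add (k : ℕ) {m j : ℕ} (hj : j ≤ m) :
    m.choose j * j ! * (m - j + k)! = m ! * k ! * (m - j + k).choose k := by
  rw [← choose_mul_factorial_mul_factorial hj, ← add_choose_mul_factorial_mul_factorial (m - j) k]
  ring

lemma sum_choose_mul_factorial_mul_factorial_sub_add (m k : ℕ) :
    (∑ j ∈ range (m + 1), m.choose j * j ! * (m - j + k)!) * (k + 1) = (m + k + 1)! := by
  have hockey_stick : ∑ j ∈ range (m + 1), (m - j + k).choose k = (m + k + 1).choose (k + 1) := by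
    rw [← sum_range_add_choose, ← sum_range_reflect]
    refine sum_congr rfl fun j hj => ?_
    rw [add_tsub_cancel_right, Nat.sub_sub_self (mem_range_succ_iff.mp hj)]
  calc (∑ j ∈ range (m + 1), m.choose j * j ! * (m - j + k)!) * (k + 1)
      = (∑ j ∈ range (m + 1), m ! * k ! * (m - j + k).choose k) * (k + 1) := by
        congr 1
        refine sum_congr rfl fun j hj => ?_
        exact choose_mul_factorial_mul_factorial_sub_add k (mem_range_succ_iff.mp hj)
    _ = (m + k + 1).choose (k + 1) * m ! * (k + 1)! := by
        rw [← mul_sum, hockey_stick, factorial_succ]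
        ring
    _ = (m + k + 1)! := add_choose_mul_factorial_mul_factorial m (k + 1)

theorem stmt_0 (n m : ℕ) (hn : 0 < n) :
    ∑ j ∈ Finset.range (m + 1),
      ((m.choose j : ℚ) * (Nat.factorial j) * (Nat.factorial (n + m - j - 1)))
      = (Nat.factorial (n + m) : ℚ) / n := by
  obtain ⟨k, rfl⟩ := Nat.exists_eq_add_one.mpr hn
  have hterm : ∀ j ∈ range (m + 1), k + 1 + m - j - 1 = m - j + k := fun j hj => by
    have := mem_range_succ_iff.mp hj
    omega
  rw [sum_congr rfl fun j hj => by rw [hterm j hj], eq_div_iff (by positivity),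
    show k + 1 + m = m + k + 1 by omega, ← sum_choose_mul_factorial_mul_factorial_sub_add]
  push_cast
  ring
end

section
/- Let c₁, c₂, d > 0 and define C₁(d) = 1 + c₁/2 + (5/4)c₁d and C_{n+1}(d) = (1 + (c₂/2)(1/n) + (c₁ + (9/4)c₂)(d/n) + (7/4)c₁(d²/n²)) · C_n(d) for n ≥ 1. Then for all n ≥ 1, C_n(d) ≤ (1 + c₁/2 + (5/4)c₁d) · exp(γ(c₂/2 + (c₁ + (9/4)c₂)d) + (7π²/24)c₁d²) · n^{c₂/2 + (c₁ + 9c₂/4)d}, where γ is the Euler–Mascheroni constant. -/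
open Real Finset

theorem stmt_10 (c₁ c₂ d : ℝ) (hc₁ : 0 < c₁) (hc₂ : 0 < c₂) (hd : 0 < d)
    (C : ℕ → ℝ) (hC1 : C 1 = 1 + c₁ / 2 + 5 / 4 * c₁ * d)
    (hCrec : ∀ n : ℕ, 1 ≤ n →
      C (n + 1) = (1 + c₂ / 2 * (1 / n) + (c₁ + 9 / 4 * c₂) * (d / n)
        + 7 / 4 * c₁ * (d ^ 2 / (n : ℝ) ^ 2)) * C n) :
    ∀ n : ℕ, 1 ≤ n →
      C n ≤ (1 + c₁ / 2 + 5 / 4 * c₁ * d)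
        * Real.exp (Real.eulerMascheroniConstant * (c₂ / 2 + (c₁ + 9 / 4 * c₂) * d)
            + 7 * Real.pi ^ 2 / 24 * c₁ * d ^ 2)
        * (n : ℝ) ^ (c₂ / 2 + (c₁ + 9 * c₂ / 4) * d) := by
  set a : ℝ := c₂ / 2 + (c₁ + 9 / 4 * c₂) * d with ha
  set b : ℝ := 7 / 4 * c₁ * d ^ 2 with hb
  have ha0 : 0 < a := by positivity
  have hb0 : 0 < b := by positivity
  set A : ℝ := 1 + c₁ / 2 + 5 / 4 * c₁ * d with hA
  have hA0 : 0 < A := by positivity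
  set S : ℕ → ℝ := fun m => ∑ k ∈ Finset.range m, (a / (k + 1) + b / ((k : ℝ) + 1) ^ 2)
    with hS
  -- key induction
  have key : ∀ n : ℕ, 1 ≤ n → C n ≤ A * Real.exp (S (n - 1)) := by
    intro n hn
    induction n with
    | zero => omega
    | succ m ih =>
      rcases Nat.eq_or_lt_of_le hn with h1 | h1
      · simp [← h1, hC1, hS]
      · have hm : 1 ≤ m := by omega
        have hm0 : (0 : ℝ) < m := by exact_mod_cast hm
        have hrec := hCrec m hm
        have hfac : (1 + c₂ / 2 * (1 / m) + (c₁ + 9 / 4 * c₂) * (d / m)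
            + 7 / 4 * c₁ * (d ^ 2 / (m : ℝ) ^ 2)) = 1 + (a / m + b / (m : ℝ) ^ 2) := by
          field_simp
          ring
        have hx0 : 0 < a / m + b / (m : ℝ) ^ 2 := by positivity
        have hexp : 1 + (a / m + b / (m : ℝ) ^ 2) ≤ Real.exp (a / m + b / (m : ℝ) ^ 2) :=
          (Real.add_one_le_exp _).trans_eq' (by ring_nf)
        have hCm := ih hm
        have hCm0 : 0 ≤ C m ∨ C m ≤ A * Real.exp (S (m - 1)) := Or.inr hCm
        have step : C (m + 1) ≤ Real.exp (a / m + b / (m : ℝ) ^ 2) * (A * Real.exp (S (m - 1))) := by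
          rw [hrec, hfac]
          have h1' : (1 + (a / m + b / (m : ℝ) ^ 2)) * C m
              ≤ (1 + (a / m + b / (m : ℝ) ^ 2)) * (A * Real.exp (S (m - 1))) :=
            mul_le_mul_of_nonneg_left hCm (by positivity)
          refine h1'.trans (mul_le_mul_of_nonneg_right hexp (by positivity))
        refine step.trans_eq ?_
        have hSm : S ((m - 1) + 1) = S (m - 1) + (a / m + b / (m : ℝ) ^ 2) := by
          simp only [hS]
          rw [Finset.sum_range_succ]
          have : ((m - 1 : ℕ) : ℝ) + 1 = (m : ℝ) := by
            have : (m - 1) + 1 = m := by omega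
            exact_mod_cast congrArg (Nat.cast (R := ℝ)) this
          rw [this]
        have hmm : (m + 1) - 1 = (m - 1) + 1 := by omega
        rw [hmm, hSm, Real.exp_add (S (m - 1)), mul_comm (Real.exp (S (m - 1))),
          mul_left_comm]
  intro n hn
  refine (key n hn).trans ?_
  have hn0 : (0 : ℝ) < n := by exact_mod_cast hn
  -- bound S (n-1)
  set m := n - 1 with hmdef
  have hmn : (m : ℝ) + 1 = (n : ℝ) := by
    have : m + 1 = n := by omega
    exact_mod_cast congrArg (Nat.cast (R := ℝ)) this
  have hSsplit : S m = a * ∑ k ∈ Finset.range m, (1 : ℝ) / (k + 1)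
      + b * ∑ k ∈ Finset.range m, (1 : ℝ) / ((k : ℝ) + 1) ^ 2 := by
    rw [hS, Finset.mul_sum, Finset.mul_sum, ← Finset.sum_add_distrib]
    refine Finset.sum_congr rfl fun k _ => ?_; field_simp
  -- harmonic bound
  have hharm : ∑ k ∈ Finset.range m, (1 : ℝ) / (k + 1)
      < Real.log n + Real.eulerMascheroniConstant := by
    have h := Real.eulerMascheroniSeq_lt_eulerMascheroniConstant m
    rw [Real.eulerMascheroniSeq] at h
    have hcast : ((harmonic m : ℚ) : ℝ) = ∑ k ∈ Finset.range m, (1 : ℝ) / (k + 1) := by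
      rw [harmonic]; push_cast
      exact Finset.sum_congr rfl fun k _ => by rw [one_div]
    rw [hcast, hmn] at h
    linarith
  -- basel bound
  have hbasel : ∑ k ∈ Finset.range m, (1 : ℝ) / ((k : ℝ) + 1) ^ 2 ≤ Real.pi ^ 2 / 6 := by
    have h2 : ∑ k ∈ Finset.range m, (1 : ℝ) / ((k : ℝ) + 1) ^ 2
        = ∑ k ∈ Finset.range (m + 1), (1 : ℝ) / (k : ℝ) ^ 2 := by
      rw [Finset.sum_range_succ' (fun k => (1 : ℝ) / (k : ℝ) ^ 2)]
      push_cast; simp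
    rw [h2]
    exact sum_le_hasSum _ (fun k _ => by positivity) hasSum_zeta_two
  have hSle : S m ≤ a * (Real.log n + Real.eulerMascheroniConstant) + b * (Real.pi ^ 2 / 6) := by
    rw [hSsplit]
    gcongr
  have hrpow : (n : ℝ) ^ (c₂ / 2 + (c₁ + 9 * c₂ / 4) * d) = Real.exp (a * Real.log n) := by
    rw [Real.rpow_def_of_pos hn0]
    congr 1
    rw [ha]; ring
  rw [hrpow, mul_assoc, ← Real.exp_add]
  refine mul_le_mul_of_nonneg_left ?_ hA0.le
  rw [Real.exp_le_exp]
  calc S m ≤ a * (Real.log n + Real.eulerMascheroniConstant) + b * (Real.pi ^ 2 / 6) := hSle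
    _ = Real.eulerMascheroniConstant * a + 7 * Real.pi ^ 2 / 24 * c₁ * d ^ 2 + a * Real.log n := by
        rw [hb]; ring
end
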